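/- arXiv:2309.01231 — 3 statements merged into one kernel-verified Lean document; each statement's English description precedes it below -/
import Mathlib

section
/- In the game saliquant, for every positive integer n, SG(n) ≥ (n − 2)/4; equivalently, 4·SG(n) + 2 ≥ n. -/
/-- Sprague–Grundy values for the game saliquant: the options of a position `n`
are the positions `n - k` where `1 ≤ k ≤ n` and `k` does not divide `n`, and
`sg n` is the least nonnegative integer not among the values of the options. -/
noncomputable def sg : ℕ → ℕ
  | n => sInf {m : ℕ | ∀ k, 1 ≤ k → k ≤ n → ¬ k ∣ n → sg (n - k) ≠ m}
decreasing_by omega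

lemma sg_def (n : ℕ) :
    sg n = sInf {m : ℕ | ∀ k, 1 ≤ k → k ≤ n → ¬ k ∣ n → sg (n - k) ≠ m} := by
  rw [sg]

lemma sg_zero : sg 0 = 0 := by
  rw [sg_def]
  refine Nat.eq_zero_of_le_zero (Nat.sInf_le ?_)
  intro k hk1 hk0
  omega

/-- Key structural lemma: `sg` of an odd number is exactly half (rounded down),
and `sg` of a positive even number is strictly less than half. -/
lemma sg_key : ∀ n : ℕ, (n % 2 = 1 → sg n = n / 2) ∧
    (n % 2 = 0 → 1 ≤ n → sg n + 1 ≤ n / 2) := by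
  intro n
  induction n using Nat.strong_induction_on with
  | _ n IH =>
    -- upper bounds on sg of smaller positions
    have hsmall : ∀ p, p < n → 2 * sg p ≤ p := by
      intro p hp
      rcases Nat.eq_zero_or_pos p with h0 | h0
      · simp [h0, sg_zero]
      · rcases Nat.even_or_odd p with hpe | hpo
        · have := (IH p hp).2 (Nat.even_iff.mp hpe) h0
          omega
        · have := (IH p hp).1 (Nat.odd_iff.mp hpo)
          omega
    constructor
    · -- odd case
      intro hodd
      rw [sg_def]
      set m := n / 2 with hm
      have hmem : m ∈ {m : ℕ | ∀ k, 1 ≤ k → k ≤ n → ¬ k ∣ n → sg (n - k) ≠ m} := by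
        intro k hk1 hkn hknd
        have hp : n - k < n := by omega
        have hpne : n - k ≠ 0 := by
          intro h
          have hk : k = n := by omega
          exact hknd (hk ▸ dvd_refl n)
        rcases Nat.even_or_odd (n - k) with hpe | hpo
        · have := (IH _ hp).2 (Nat.even_iff.mp hpe) (by omega)
          have hpn : n - k ≤ n - 1 := by omega
          omega
        · have := (IH _ hp).1 (Nat.odd_iff.mp hpo)
          have h2 : (n - k) % 2 = 1 := Nat.odd_iff.mp hpo
          omega
      refine le_antisymm (Nat.sInf_le hmem) ?_
      by_contra hlt
      push_neg at hlt
      obtain ⟨j, hjS, hjm⟩ : ∃ j ∈ {m : ℕ | ∀ k, 1 ≤ k → k ≤ n → ¬ k ∣ n → sg (n - k) ≠ m},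
          j < m := by
        refine ⟨sInf _, Nat.sInf_mem ⟨m, hmem⟩, hlt⟩
      -- j < m = n/2, take k = n - (2j+1)
      set k := n - (2 * j + 1) with hk
      have hk1 : 1 ≤ k := by omega
      have hkn : k ≤ n := by omega
      have hke : k % 2 = 0 := by omega
      have hknd : ¬ k ∣ n := by
        intro hdvd
        have : (2 : ℕ) ∣ n := dvd_trans (by omega) hdvd
        omega
      have hnk : n - k = 2 * j + 1 := by omega
      have := hjS k hk1 hkn hknd
      rw [hnk] at this
      have hsgj : sg (2 * j + 1) = (2 * j + 1) / 2 :=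
        (IH _ (by omega)).1 (by omega)
      omega
    · -- even case
      intro heven hn1
      rw [sg_def]
      have hmem : n / 2 - 1 ∈
          {m : ℕ | ∀ k, 1 ≤ k → k ≤ n → ¬ k ∣ n → sg (n - k) ≠ m} := by
        intro k hk1 hkn hknd
        have hkne1 : k ≠ 1 := by
          intro h; exact hknd (h ▸ one_dvd n)
        have hknen : k ≠ n := by
          intro h; exact hknd (h ▸ dvd_refl n)
        have hp : n - k < n := by omega
        have hpne : n - k ≠ 0 := by omega
        rcases Nat.even_or_odd (n - k) with hpe | hpo
        · have := (IH _ hp).2 (Nat.even_iff.mp hpe) (by omega)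
          have h2 : (n - k) % 2 = 0 := Nat.even_iff.mp hpe
          omega
        · have := (IH _ hp).1 (Nat.odd_iff.mp hpo)
          have h2 : (n - k) % 2 = 1 := Nat.odd_iff.mp hpo
          omega
      have := Nat.sInf_le hmem
      omega

theorem saliquant_uniform_lower_bound (n : ℕ) (hn : 0 < n) :
    n ≤ 4 * sg n + 2 := by
  by_contra h
  push_neg at h
  set m := sg n with hm
  -- the defining set is nonempty: n itself belongs to it
  have hsmall : ∀ p, p < n → 2 * sg p ≤ p := by
    intro p hp
    rcases Nat.eq_zero_or_pos p with h0 | h0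
    · simp [h0, sg_zero]
    · rcases Nat.even_or_odd p with hpe | hpo
      · have := (sg_key p).2 (Nat.even_iff.mp hpe) h0
        omega
      · have := (sg_key p).1 (Nat.odd_iff.mp hpo)
        omega
  have hne : n ∈ {m : ℕ | ∀ k, 1 ≤ k → k ≤ n → ¬ k ∣ n → sg (n - k) ≠ m} := by
    intro k hk1 hkn hknd
    have : 2 * sg (n - k) ≤ n - k := hsmall _ (by omega)
    omega
  have hmmem : m ∈ {m : ℕ | ∀ k, 1 ≤ k → k ≤ n → ¬ k ∣ n → sg (n - k) ≠ m} := by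
    rw [hm, sg_def]
    exact Nat.sInf_mem ⟨n, hne⟩
  -- take k = n - (2m+1); then n/2 < k < n, so k does not divide n
  set k := n - (2 * m + 1) with hk
  have hk1 : 1 ≤ k := by omega
  have hkn : k ≤ n := by omega
  have hknd : ¬ k ∣ n := by
    intro hdvd
    obtain ⟨c, hc⟩ := hdvd
    rcases Nat.lt_or_ge c 2 with hc2 | hc2
    · interval_cases c <;> omega
    · have h2k : k * 2 ≤ n := hc ▸ Nat.mul_le_mul_left k hc2
      omega
  have hnk : n - k = 2 * m + 1 := by omega
  have := hmmem k hk1 hkn hknd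
  rw [hnk] at this
  have hsgm : sg (2 * m + 1) = (2 * m + 1) / 2 :=
    (sg_key _).1 (by omega)
  omega
end

section
/- In the game saliquant, for every b ≥ 1, either SG(21·2^b) = 21·2^(b−1) − 11 or SG(21·2^b) = 21·2^(b−1) − 4. -/
lemma sg_le_self (n : ℕ) : sg n ≤ n := by
  induction n using Nat.strong_induction_on with
  | _ n ih =>
    rw [sg]
    apply Nat.sInf_le
    intro k h1 h2 h3
    have := ih (n - k) (by omega)
    omega

lemma sg_spec (n : ℕ) : ∀ k, 1 ≤ k → k ≤ n → ¬ k ∣ n → sg (n - k) ≠ sg n := by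
  have h : sg n ∈ {m : ℕ | ∀ k, 1 ≤ k → k ≤ n → ¬ k ∣ n → sg (n - k) ≠ m} := by
    rw [sg]
    exact Nat.sInf_mem ⟨n, fun k h1 h2 h3 => by have := sg_le_self (n - k); omega⟩
  exact h

lemma sg_le (n v : ℕ) (h : ∀ k, 1 ≤ k → k ≤ n → ¬ k ∣ n → sg (n - k) ≠ v) : sg n ≤ v := by
  rw [sg]
  exact Nat.sInf_le h

lemma sg_parity (n : ℕ) :
    (n % 2 = 1 → 2 * sg n + 1 = n) ∧ (n % 2 = 0 → 1 ≤ n → 2 * sg n + 2 ≤ n) := by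
  induction n using Nat.strong_induction_on with
  | _ n ih =>
    constructor
    · intro hodd
      obtain ⟨t, ht⟩ : ∃ t, n = 2 * t + 1 := ⟨n / 2, by omega⟩
      have hle : sg n ≤ t := by
        apply sg_le
        intro k h1 h2 h3 heq
        have hkn : k ≠ n := fun h => h3 (h ▸ dvd_refl n)
        have hm : n - k < n := by omega
        rcases Nat.even_or_odd (n - k) with he | ho
        · have hm2 : (n - k) % 2 = 0 := Nat.even_iff.mp he
          have := (ih (n - k) hm).2 hm2 (by omega)
          omega
        · have hm2 : (n - k) % 2 = 1 := Nat.odd_iff.mp ho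
          have := (ih (n - k) hm).1 hm2
          omega
      have hge : t ≤ sg n := by
        by_contra hcon
        push_neg at hcon
        have h1 : 1 ≤ n - (2 * sg n + 1) := by omega
        have h2 : n - (2 * sg n + 1) ≤ n := by omega
        have h3 : ¬ (n - (2 * sg n + 1)) ∣ n := by
          intro hdvd
          have h2d : (2 : ℕ) ∣ n := dvd_trans ⟨t - sg n, by omega⟩ hdvd
          omega
        have hx := sg_spec n (n - (2 * sg n + 1)) h1 h2 h3
        have e : n - (n - (2 * sg n + 1)) = 2 * sg n + 1 := by omega
        have h5 := (ih (2 * sg n + 1) (by omega)).1 (by omega)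
        rw [e] at hx
        omega
      omega
    · intro heven h1n
      obtain ⟨t, ht⟩ : ∃ t, n = 2 * t := ⟨n / 2, by omega⟩
      have hle : sg n ≤ t - 1 := by
        apply sg_le
        intro k h1 h2 h3 heq
        have hkn : k ≠ n := fun h => h3 (h ▸ dvd_refl n)
        have hk1 : k ≠ 1 := by rintro rfl; exact h3 (one_dvd n)
        have hk2 : k ≠ 2 := by rintro rfl; exact h3 ⟨t, ht⟩
        have hm : n - k < n := by omega
        rcases Nat.even_or_odd (n - k) with he | ho
        · have hm2 : (n - k) % 2 = 0 := Nat.even_iff.mp he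
          have := (ih (n - k) hm).2 hm2 (by omega)
          omega
        · have hm2 : (n - k) % 2 = 1 := Nat.odd_iff.mp ho
          have := (ih (n - k) hm).1 hm2
          omega
      omega

lemma sg_even_div (n : ℕ) (h : n % 2 = 0) (h1 : 1 ≤ n) :
    ∃ d, d % 2 = 1 ∧ d ∣ n ∧ 2 * sg n + d + 1 = n := by
  have hub := (sg_parity n).2 h h1
  refine ⟨n - 2 * sg n - 1, by omega, ?_, by omega⟩
  by_contra hd
  have h5 := sg_spec n (n - 2 * sg n - 1) (by omega) (by omega) hd
  have e : n - (n - 2 * sg n - 1) = 2 * sg n + 1 := by omega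
  have h6 := (sg_parity (2 * sg n + 1)).1 (by omega)
  rw [e] at h5
  omega

lemma odd_dvd_21 (d b : ℕ) (hd : d % 2 = 1) (hdvd : d ∣ 21 * 2 ^ b) : d ∣ 21 := by
  have hcop : Nat.Coprime d 2 := by
    rw [Nat.coprime_two_right]
    exact Nat.odd_iff.mpr hd
  exact (Nat.Coprime.pow_right b hcop).dvd_of_dvd_mul_right hdvd

theorem saliquant_21_times_power_of_two (b : ℕ) (hb : 1 ≤ b) :
    sg (21 * 2 ^ b) = 21 * 2 ^ (b - 1) - 11 ∨
    sg (21 * 2 ^ b) = 21 * 2 ^ (b - 1) - 4 := by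
  obtain ⟨c, rfl⟩ : ∃ c, b = c + 1 := ⟨b - 1, by omega⟩
  simp only [Nat.add_sub_cancel]
  set n := 21 * 2 ^ (c + 1) with hn
  set t := 21 * 2 ^ c with htdef
  have h2c : 1 ≤ 2 ^ c := Nat.one_le_two_pow
  have hnt : n = 2 * t := by rw [hn, htdef, pow_succ]; ring
  have ht21 : 21 ≤ t := by omega
  have h2n : (2 : ℕ) ∣ n := ⟨t, hnt⟩
  have h6n : (6 : ℕ) ∣ n := ⟨7 * 2 ^ c, by rw [hn, pow_succ]; ring⟩
  have h7n : (7 : ℕ) ∣ n := ⟨3 * 2 ^ (c + 1), by rw [hn]; ring⟩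
  -- the value t - 4 is not attained by any option
  have hA : ∀ k, 1 ≤ k → k ≤ n → ¬ k ∣ n → sg (n - k) ≠ t - 4 := by
    intro k h1 h2 h3 heq
    have hkn : k ≠ n := fun h => h3 (h ▸ dvd_refl n)
    rcases Nat.even_or_odd (n - k) with he | ho
    · have hm2 : (n - k) % 2 = 0 := Nat.even_iff.mp he
      obtain ⟨d, hd1, hd2, hd3⟩ := sg_even_div (n - k) hm2 (by omega)
      -- k + d = 7, k even, so k ∈ {2,4,6}
      have hk246 : k = 2 ∨ k = 4 ∨ k = 6 := by omega
      rcases hk246 with rfl | rfl | rfl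
      · exact h3 h2n
      · -- k = 4 : d = 3 must divide n - 4
        have hd3' : d = 3 := by omega
        subst hd3'
        rcases Nat.eq_zero_or_pos c with rfl | hc
        · -- n = 42, 3 ∤ 38
          have hm38 : n - 4 = 38 := by norm_num [hn]
          rw [hm38] at hd2
          omega
        · exact h3 ⟨21 * 2 ^ (c - 1), by
            rw [hn]
            rcases Nat.exists_eq_add_of_le hc with ⟨e, rfl⟩
            simp [pow_succ, pow_add]
            ring⟩
      · exact h3 h6n
    · have hm2 : (n - k) % 2 = 1 := Nat.odd_iff.mp ho
      have hodd := (sg_parity (n - k)).1 hm2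
      have hk7 : k = 7 := by omega
      exact h3 (hk7 ▸ h7n)
  have hs_le : sg n ≤ t - 4 := sg_le n (t - 4) hA
  -- every value u < t - 4 with u ≠ t - 11 is attained
  by_contra hcon
  push_neg at hcon
  obtain ⟨hne11, hne4⟩ := hcon
  have hult : sg n < t - 4 := by omega
  set u := sg n with hu
  set k := n - (2 * u + 1) with hk
  have hk1 : 1 ≤ k := by omega
  have hk2 : k ≤ n := by omega
  have hk3 : ¬ k ∣ n := by
    intro hdvd
    have hkodd : k % 2 = 1 := by omega
    have hk21 : k ∣ 21 := odd_dvd_21 k (c + 1) hkodd (by rw [← hn]; exact hdvd)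
    have hkle : k ≤ 21 := Nat.le_of_dvd (by norm_num) hk21
    have hk9 : 9 ≤ k := by omega
    have hkne21 : k ≠ 21 := by omega
    interval_cases k <;> omega
  have hx := sg_spec n k hk1 hk2 hk3
  have e : n - k = 2 * u + 1 := by omega
  have h5 := (sg_parity (2 * u + 1)).1 (by omega)
  rw [e] at hx
  omega
end

section
/- If p is an odd prime, then C(2p) = C(2(p + 1)), where C(m) is the number of iterations of the map g(m) = m − φ(m) needed to reach 1 from m. -/
/-- `g n = n - φ(n)`, the unique option in the game nontotient. -/
def g (n : ℕ) : ℕ := n - Nat.totient n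

/-- `C n` is the least nonnegative integer `i` such that `g^[i] n = 1`. -/
noncomputable def C (n : ℕ) : ℕ := sInf {i : ℕ | g^[i] n = 1}

lemma g_lt (n : ℕ) (h : 1 < n) : g n < n := by
  have := Nat.totient_pos.mpr (by omega : 0 < n)
  unfold g; omega

lemma g_pos (n : ℕ) (h : 1 < n) : 1 ≤ g n := by
  have := Nat.totient_lt n h
  unfold g; omega

lemma exists_iter : ∀ n : ℕ, 1 ≤ n → ∃ i, g^[i] n = 1 := by
  intro n
  induction n using Nat.strong_induction_on with
  | _ n ih =>
    intro h
    rcases eq_or_lt_of_le h with h1 | h1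
    · exact ⟨0, h1.symm⟩
    · obtain ⟨i, hi⟩ := ih (g n) (g_lt n h1) (g_pos n h1)
      exact ⟨i + 1, by rwa [Function.iterate_succ_apply]⟩

lemma C_mem (n : ℕ) (h : 1 ≤ n) : g^[C n] n = 1 :=
  Nat.sInf_mem (exists_iter n h)

lemma C_rec (n : ℕ) (h : 1 < n) : C n = C (g n) + 1 := by
  have hmem := C_mem n (by omega)
  have h0 : C n ≠ 0 := by
    intro h0
    rw [h0] at hmem
    simp at hmem; omega
  obtain ⟨m, hm⟩ := Nat.exists_eq_succ_of_ne_zero h0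
  have hm1 : g^[m] (g n) = 1 := by
    rw [hm, Function.iterate_succ_apply] at hmem
    exact hmem
  have h1 : C (g n) ≤ m := Nat.sInf_le hm1
  have hg1 : g^[C (g n)] (g n) = 1 := C_mem (g n) (g_pos n h)
  have h2 : C n ≤ C (g n) + 1 :=
    Nat.sInf_le (show g^[C (g n) + 1] n = 1 by
      rw [Function.iterate_succ_apply]; exact hg1)
  omega

lemma g_double (n : ℕ) (hn : Even n) (h2 : 2 ≤ n) : g (2 * n) = 2 * g n := by
  have h := Nat.totient_mul_of_prime_of_dvd Nat.prime_two hn.two_dvd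
  have h3 : Nat.totient n ≤ n := Nat.totient_le n
  unfold g
  rw [h]
  omega

lemma C_double : ∀ n : ℕ, Even n → 2 ≤ n → C (2 * n) = C n + 1 := by
  intro n
  induction n using Nat.strong_induction_on with
  | _ n ih =>
    intro hn h2
    rcases eq_or_lt_of_le h2 with h | h
    · -- n = 2
      have hn2 : n = 2 := h.symm
      subst hn2
      have hg4 : g 4 = 2 := by decide
      have := C_rec 4 (by norm_num)
      rw [this, hg4]
    · -- n > 2
      have hgn_even : Even (g n) := by
        have hφ : Even (Nat.totient n) := Nat.totient_even h
        obtain ⟨a, ha⟩ := hn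
        obtain ⟨b, hb⟩ := hφ
        have hle : Nat.totient n ≤ n := Nat.totient_le n
        exact ⟨a - b, by unfold g; omega⟩
      have hgn2 : 2 ≤ g n := by
        have := g_pos n (by omega)
        obtain ⟨k, hk⟩ := hgn_even
        omega
      have hgnlt : g n < n := g_lt n (by omega)
      calc C (2 * n) = C (g (2 * n)) + 1 := C_rec _ (by omega)
        _ = C (2 * g n) + 1 := by rw [g_double n hn (by omega)]
        _ = (C (g n) + 1) + 1 := by rw [ih (g n) hgnlt hgn_even hgn2]
        _ = C n + 1 := by rw [← C_rec n (by omega)]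

theorem nontotient_C_twice_prime (p : ℕ) (hp : p.Prime) (hodd : Odd p) :
    C (2 * p) = C (2 * (p + 1)) := by
  have hp2 : p ≠ 2 := by
    rintro rfl
    exact (by decide : ¬ Odd 2) hodd
  have hp3 : 3 ≤ p := by
    have := hp.two_le
    omega
  have hcop : Nat.Coprime 2 p :=
    (Nat.coprime_primes Nat.prime_two hp).mpr (Ne.symm hp2)
  have hg2p : g (2 * p) = p + 1 := by
    unfold g
    rw [Nat.totient_mul hcop, Nat.totient_two, Nat.totient_prime hp]
    omega
  have h1 : C (2 * p) = C (p + 1) + 1 := by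
    rw [C_rec (2 * p) (by omega), hg2p]
  have heven : Even (p + 1) := Odd.add_one hodd
  have h2 : C (2 * (p + 1)) = C (p + 1) + 1 := C_double (p + 1) heven (by omega)
  rw [h1, h2]
end
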